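/- The sets A = {(s,t,u) ∈ ℝ³ : 0 < s < 1/2, 1/2 < t < 1, 0 < u < min{1−t, (1−t)²/s, (2t−1)/(t−s)}} and B = {(s,t,u) ∈ ℝ³ : 1/2 < s < 1, 0 < t < 1/2, 0 < u < min{t, t²/(1−s), (1−2t)/(s−t)}} are nonempty, open in ℝ³, connected, and disjoint. Consequently the set S⁻ = A ∪ B has exactly two connected components, namely A and B. -/
import Mathlib

/-- The piece A with 0 < s < 1/2 < t < 1. -/
def Apiece : Set (ℝ × ℝ × ℝ) :=
  {p | 0 < p.1 ∧ p.1 < 1/2 ∧ 1/2 < p.2.1 ∧ p.2.1 < 1 ∧ 0 < p.2.2 ∧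
    p.2.2 < min (1 - p.2.1) (min ((1 - p.2.1) ^ 2 / p.1)
      ((2 * p.2.1 - 1) / (p.2.1 - p.1)))}

/-- The piece B with 0 < t < 1/2 < s < 1. -/
def Bpiece : Set (ℝ × ℝ × ℝ) :=
  {p | 1/2 < p.1 ∧ p.1 < 1 ∧ 0 < p.2.1 ∧ p.2.1 < 1/2 ∧ 0 < p.2.2 ∧
    p.2.2 < min p.2.1 (min (p.2.1 ^ 2 / (1 - p.1))
      ((1 - 2 * p.2.1) / (p.1 - p.2.1)))}

/-- General lemma: the region strictly between 0 and a positive continuous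
function over a convex base is connected. -/
lemma isPreconnected_under {R : Set (ℝ × ℝ)} (hR : Convex ℝ R)
    {m : ℝ × ℝ → ℝ} (hm : ContinuousOn m R) (hpos : ∀ x ∈ R, 0 < m x) :
    IsPreconnected {p : ℝ × ℝ × ℝ | (p.1, p.2.1) ∈ R ∧ 0 < p.2.2 ∧
      p.2.2 < m (p.1, p.2.1)} := by
  set C : Set (ℝ × ℝ × ℝ) :=
    {p | (p.1, p.2.1) ∈ R ∧ p.2.2 ∈ Set.Ioo (0:ℝ) 1} with hC
  have hCconv : Convex ℝ C := by
    intro p hp q hq a b ha hb hab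
    refine ⟨?_, ?_⟩
    · have := hR hp.1 hq.1 ha hb hab
      simpa [Prod.smul_def, Prod.add_def] using this
    · have := (convex_Ioo (0:ℝ) 1) hp.2 hq.2 ha hb hab
      simpa [Prod.smul_def, Prod.add_def] using this
  have hΦ : ContinuousOn
      (fun p : ℝ × ℝ × ℝ => (p.1, p.2.1, p.2.2 * m (p.1, p.2.1))) C := by
    apply ContinuousOn.prodMk continuous_fst.continuousOn
    apply ContinuousOn.prodMk (continuous_fst.comp continuous_snd).continuousOn
    apply ContinuousOn.mul (continuous_snd.comp continuous_snd).continuousOn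
    exact hm.comp (continuous_fst.prodMk
      (continuous_fst.comp continuous_snd)).continuousOn (fun p hp => hp.1)
  have himg : (fun p : ℝ × ℝ × ℝ => (p.1, p.2.1, p.2.2 * m (p.1, p.2.1))) '' C
      = {p : ℝ × ℝ × ℝ | (p.1, p.2.1) ∈ R ∧ 0 < p.2.2 ∧
          p.2.2 < m (p.1, p.2.1)} := by
    ext ⟨s, t, u⟩
    constructor
    · rintro ⟨⟨s', t', l⟩, ⟨hmem, hl0, hl1⟩, h⟩
      simp only [Prod.mk.injEq] at h
      obtain ⟨rfl, rfl, rfl⟩ := h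
      dsimp only at hmem hl0 hl1 ⊢
      have hm0 := hpos _ hmem
      exact ⟨hmem, mul_pos hl0 hm0, by show l * m (s', t') < m (s', t'); nlinarith⟩
    · rintro ⟨hmem, hu0, hum⟩
      have hm0 := hpos _ hmem
      refine ⟨(s, t, u / m (s, t)), ⟨hmem, div_pos hu0 hm0,
        (div_lt_one hm0).2 hum⟩, ?_⟩
      simp [div_mul_cancel₀ _ hm0.ne']
  rw [← himg]
  exact (hCconv.isPreconnected).image _ hΦ

/-- Component identification lemma. -/
lemma comp_eq_of_open_disjoint {U V : Set (ℝ × ℝ × ℝ)} (hU : IsOpen U)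
    (hV : IsOpen V) (hUc : IsPreconnected U) (hd : Disjoint U V)
    {x : ℝ × ℝ × ℝ} (hx : x ∈ U) :
    connectedComponentIn (U ∪ V) x = U := by
  refine subset_antisymm ?_ (hUc.subset_connectedComponentIn hx
    Set.subset_union_left)
  intro y hy
  rcases connectedComponentIn_subset (U ∪ V) x hy with h | h
  · exact h
  · exfalso
    have hpc : IsPreconnected (connectedComponentIn (U ∪ V) x) :=
      isPreconnected_connectedComponentIn
    have hxc : x ∈ connectedComponentIn (U ∪ V) x :=
      mem_connectedComponentIn (Set.mem_union_left _ hx)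
    have := hpc U V hU hV (connectedComponentIn_subset _ _)
      ⟨x, hxc, hx⟩ ⟨y, hy, h⟩
    obtain ⟨z, _, hzU, hzV⟩ := this
    exact hd.ne_of_mem hzU hzV rfl

/-- A and B are nonempty, open, connected and disjoint; consequently A ∪ B has
exactly two connected components, namely A and B. -/
theorem Apiece_Bpiece_components :
    Apiece.Nonempty ∧ Bpiece.Nonempty ∧ IsOpen Apiece ∧ IsOpen Bpiece ∧
    IsConnected Apiece ∧ IsConnected Bpiece ∧ Disjoint Apiece Bpiece ∧
    {C : Set (ℝ × ℝ × ℝ) | ∃ x ∈ Apiece ∪ Bpiece,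
      connectedComponentIn (Apiece ∪ Bpiece) x = C} = {Apiece, Bpiece} := by
  -- nonemptiness
  have hAne : Apiece.Nonempty := by
    refine ⟨(1/4, 3/4, 1/8), ?_⟩
    simp only [Apiece, Set.mem_setOf_eq, lt_min_iff]
    norm_num
  have hBne : Bpiece.Nonempty := by
    refine ⟨(3/4, 1/4, 1/8), ?_⟩
    simp only [Bpiece, Set.mem_setOf_eq, lt_min_iff]
    norm_num
  -- polynomial descriptions
  have hAeq : Apiece = {p : ℝ × ℝ × ℝ | 0 < p.1 ∧ p.1 < 1/2 ∧ 1/2 < p.2.1 ∧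
      p.2.1 < 1 ∧ 0 < p.2.2 ∧ p.2.2 < 1 - p.2.1 ∧
      p.2.2 * p.1 < (1 - p.2.1)^2 ∧ p.2.2 * (p.2.1 - p.1) < 2 * p.2.1 - 1} := by
    ext ⟨s, t, u⟩
    simp only [Apiece, Set.mem_setOf_eq, lt_min_iff]
    constructor
    · rintro ⟨h1, h2, h3, h4, h5, h6, h7, h8⟩
      exact ⟨h1, h2, h3, h4, h5, h6, (lt_div_iff₀ h1).1 h7,
        (lt_div_iff₀ (by linarith)).1 h8⟩
    · rintro ⟨h1, h2, h3, h4, h5, h6, h7, h8⟩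
      exact ⟨h1, h2, h3, h4, h5, h6, (lt_div_iff₀ h1).2 h7,
        (lt_div_iff₀ (by linarith)).2 h8⟩
  have hBeq : Bpiece = {p : ℝ × ℝ × ℝ | 1/2 < p.1 ∧ p.1 < 1 ∧ 0 < p.2.1 ∧
      p.2.1 < 1/2 ∧ 0 < p.2.2 ∧ p.2.2 < p.2.1 ∧
      p.2.2 * (1 - p.1) < p.2.1^2 ∧ p.2.2 * (p.1 - p.2.1) < 1 - 2 * p.2.1} := by
    ext ⟨s, t, u⟩
    simp only [Bpiece, Set.mem_setOf_eq, lt_min_iff]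
    constructor
    · rintro ⟨h1, h2, h3, h4, h5, h6, h7, h8⟩
      exact ⟨h1, h2, h3, h4, h5, h6, (lt_div_iff₀ (by linarith)).1 h7,
        (lt_div_iff₀ (by linarith)).1 h8⟩
    · rintro ⟨h1, h2, h3, h4, h5, h6, h7, h8⟩
      exact ⟨h1, h2, h3, h4, h5, h6, (lt_div_iff₀ (by linarith)).2 h7,
        (lt_div_iff₀ (by linarith)).2 h8⟩
  -- openness
  have c1 : Continuous fun p : ℝ × ℝ × ℝ => p.1 := continuous_fst
  have c2 : Continuous fun p : ℝ × ℝ × ℝ => p.2.1 :=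
    continuous_fst.comp continuous_snd
  have c3 : Continuous fun p : ℝ × ℝ × ℝ => p.2.2 :=
    continuous_snd.comp continuous_snd
  have hAopen : IsOpen Apiece := by
    rw [hAeq]
    refine IsOpen.inter (isOpen_lt continuous_const c1) ?_
    refine IsOpen.inter (isOpen_lt c1 continuous_const) ?_
    refine IsOpen.inter (isOpen_lt continuous_const c2) ?_
    refine IsOpen.inter (isOpen_lt c2 continuous_const) ?_
    refine IsOpen.inter (isOpen_lt continuous_const c3) ?_
    refine IsOpen.inter (isOpen_lt c3 (continuous_const.sub c2)) ?_
    exact IsOpen.inter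
      (isOpen_lt (c3.mul c1) ((continuous_const.sub c2).pow 2))
      (isOpen_lt (c3.mul (c2.sub c1))
        ((continuous_const.mul c2).sub continuous_const))
  have hBopen : IsOpen Bpiece := by
    rw [hBeq]
    refine IsOpen.inter (isOpen_lt continuous_const c1) ?_
    refine IsOpen.inter (isOpen_lt c1 continuous_const) ?_
    refine IsOpen.inter (isOpen_lt continuous_const c2) ?_
    refine IsOpen.inter (isOpen_lt c2 continuous_const) ?_
    refine IsOpen.inter (isOpen_lt continuous_const c3) ?_
    refine IsOpen.inter (isOpen_lt c3 c2) ?_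
    exact IsOpen.inter
      (isOpen_lt (c3.mul (continuous_const.sub c1)) (c2.pow 2))
      (isOpen_lt (c3.mul (c1.sub c2))
        (continuous_const.sub (continuous_const.mul c2)))
  -- connectedness of A
  have hApre : IsPreconnected Apiece := by
    have : Apiece = {p : ℝ × ℝ × ℝ |
        (p.1, p.2.1) ∈ (Set.Ioo (0:ℝ) (1/2) ×ˢ Set.Ioo (1/2:ℝ) 1) ∧
        0 < p.2.2 ∧ p.2.2 < (fun x : ℝ × ℝ => min (1 - x.2)
          (min ((1 - x.2)^2 / x.1) ((2 * x.2 - 1) / (x.2 - x.1))))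
          (p.1, p.2.1)} := by
      ext ⟨s, t, u⟩
      simp only [Apiece, Set.mem_setOf_eq, Set.mem_prod, Set.mem_Ioo]
      tauto
    rw [this]
    refine isPreconnected_under (m := fun x : ℝ × ℝ => min (1 - x.2)
        (min ((1 - x.2)^2 / x.1) ((2 * x.2 - 1) / (x.2 - x.1))))
      ((convex_Ioo _ _).prod (convex_Ioo _ _)) ?_ ?_
    · apply ContinuousOn.inf' (by fun_prop)
      apply ContinuousOn.inf'
      · exact ContinuousOn.div (by fun_prop) continuous_fst.continuousOn
          (fun x hx => (hx.1.1).ne')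
      · exact ContinuousOn.div (by fun_prop)
          (continuous_snd.sub continuous_fst).continuousOn
          (fun x hx => by have := hx.1.2; have := hx.2.1; dsimp; linarith)
    · rintro ⟨s, t⟩ ⟨⟨hs0, hs1⟩, ht0, ht1⟩
      simp only [lt_min_iff]
      dsimp at hs0 hs1 ht0 ht1 ⊢
      refine ⟨by linarith, div_pos (pow_pos (by linarith) 2) hs0,
        div_pos (by linarith) (by linarith)⟩
  have hBpre : IsPreconnected Bpiece := by
    have : Bpiece = {p : ℝ × ℝ × ℝ |
        (p.1, p.2.1) ∈ (Set.Ioo (1/2:ℝ) 1 ×ˢ Set.Ioo (0:ℝ) (1/2)) ∧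
        0 < p.2.2 ∧ p.2.2 < (fun x : ℝ × ℝ => min x.2
          (min (x.2^2 / (1 - x.1)) ((1 - 2 * x.2) / (x.1 - x.2))))
          (p.1, p.2.1)} := by
      ext ⟨s, t, u⟩
      simp only [Bpiece, Set.mem_setOf_eq, Set.mem_prod, Set.mem_Ioo]
      tauto
    rw [this]
    refine isPreconnected_under (m := fun x : ℝ × ℝ => min x.2
        (min (x.2^2 / (1 - x.1)) ((1 - 2 * x.2) / (x.1 - x.2))))
      ((convex_Ioo _ _).prod (convex_Ioo _ _)) ?_ ?_
    · apply ContinuousOn.inf' continuous_snd.continuousOn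
      apply ContinuousOn.inf'
      · refine ContinuousOn.div (by fun_prop) (by fun_prop) (fun x hx => ?_)
        have h1 := hx.1.2
        intro h
        have := sub_eq_zero.1 h
        linarith
      · exact ContinuousOn.div (by fun_prop)
          (continuous_fst.sub continuous_snd).continuousOn
          (fun x hx => by have := hx.1.1; have := hx.2.2; dsimp; linarith)
    · rintro ⟨s, t⟩ ⟨⟨hs0, hs1⟩, ht0, ht1⟩
      simp only [lt_min_iff]
      dsimp at hs0 hs1 ht0 ht1 ⊢
      refine ⟨ht0, div_pos (pow_pos (by linarith) 2) (by linarith),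
        div_pos (by linarith) (by linarith)⟩
  -- disjointness
  have hdisj : Disjoint Apiece Bpiece := by
    rw [Set.disjoint_left]
    rintro ⟨s, t, u⟩ hA hB
    simp only [Apiece, Bpiece, Set.mem_setOf_eq] at hA hB
    linarith [hA.1, hA.2.1, hB.1]
  have hAconn : IsConnected Apiece := ⟨hAne, hApre⟩
  have hBconn : IsConnected Bpiece := ⟨hBne, hBpre⟩
  refine ⟨hAne, hBne, hAopen, hBopen, hAconn, hBconn, hdisj, ?_⟩
  ext C
  simp only [Set.mem_setOf_eq, Set.mem_insert_iff, Set.mem_singleton_iff]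
  constructor
  · rintro ⟨x, hx, rfl⟩
    rcases hx with hx | hx
    · exact Or.inl (comp_eq_of_open_disjoint hAopen hBopen hApre hdisj hx)
    · right
      have := comp_eq_of_open_disjoint hBopen hAopen hBpre hdisj.symm hx
      rwa [Set.union_comm] at this
  · rintro (rfl | rfl)
    · obtain ⟨a, ha⟩ := hAne
      exact ⟨a, Or.inl ha, comp_eq_of_open_disjoint hAopen hBopen hApre hdisj ha⟩
    · obtain ⟨b, hb⟩ := hBne
      refine ⟨b, Or.inr hb, ?_⟩
      have := comp_eq_of_open_disjoint hBopen hAopen hBpre hdisj.symm hb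
      rwa [Set.union_comm] at this
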